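/- Let l, k ≥ 1 be integers, let X_l(θ) = cos(lθ) and Y_k(θ) = sin(kθ), acting on H by X.u = −u'·X + (1/2π)∫₀^{2π}u'(θ)X(θ)dθ. Then for all nonzero integers m, n: (X_l.ẽ_n, ẽ_m)_ω = s(m,n)·(1/2)·√(|mn|)·(δ_{m−n,l} + δ_{n−m,l}) and (Y_k.ẽ_n, ẽ_m)_ω = (−i)·s(m,n)·(1/2)·√(|mn|)·(δ_{m−n,k} − δ_{n−m,k}), where s(m,n) = −i if m,n > 0; s(m,n) = 1 if m and n have opposite signs; s(m,n) = i if m,n < 0. -/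

import Mathlib

open MeasureTheory

/-- The `n`-th Fourier coefficient of a `2π`-periodic function `f : ℝ → ℂ`. -/
noncomputable def fourierCoef (f : ℝ → ℂ) (n : ℤ) : ℂ :=
  (1 / (2 * Real.pi)) * ∫ θ in (0:ℝ)..(2 * Real.pi),
    f θ * Complex.exp (-(Complex.I) * (n : ℂ) * (θ : ℂ))

/-- The `H^{1/2}` inner product `(f,g)_ω = Σ_{n≠0} |n|·f̂(n)·conj(ĝ(n))`. -/
noncomputable def ipOmega (f g : ℝ → ℂ) : ℂ :=
  ∑' n : ℤ, ((|n| : ℤ) : ℂ) * fourierCoef f n * (starRingEnd ℂ) (fourierCoef g n)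

/-- The orthonormal basis functions `ẽ_n`: `ẽ_n(θ) = e^{inθ}/√n` for `n > 0` and
`ẽ_n(θ) = e^{inθ}/(i√|n|)` for `n < 0`. -/
noncomputable def etld (n : ℤ) : ℝ → ℂ := fun θ =>
  if 0 < n then Complex.exp (Complex.I * (n : ℂ) * (θ : ℂ)) / (Real.sqrt n : ℝ)
  else Complex.exp (Complex.I * (n : ℂ) * (θ : ℂ)) / (Complex.I * (Real.sqrt |(n : ℝ)| : ℝ))

/-- The action of a smooth real vector field `X` on `u ∈ H`:
`X.u = −u'·X + (1/2π)∫₀^{2π} u'(θ)X(θ) dθ`. -/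
noncomputable def fieldAct (X : ℝ → ℝ) (u : ℝ → ℂ) : ℝ → ℂ := fun θ =>
  -(deriv u θ * (X θ : ℝ)) +
    (1 / (2 * Real.pi) : ℂ) * ∫ t in (0:ℝ)..(2 * Real.pi), deriv u t * (X t : ℝ)

/-- The sign factor `s(m,n)`: `−i` if `m,n > 0`; `i` if `m,n < 0`; `1` otherwise. -/
noncomputable def sFactor (m n : ℤ) : ℂ :=
  if 0 < m ∧ 0 < n then -Complex.I else if m < 0 ∧ n < 0 then Complex.I else 1

/-! With `eₚ(θ) = e^{ipθ}` and `√n` the principal complex square root of `n`, we have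
`ẽₙ = eₙ / √n`, `(√n)² = n` and `|√n|² = |n|`. Hence `ẽₙ' = i √n eₙ`, and since `cos (lθ)` and
`sin (lθ)` are combinations of `e_l` and `e_{-l}`, the field `−ẽₙ' X` is a combination of
`e_{n+l}` and `e_{n-l}`. The mean-value correction only changes the zeroth Fourier coefficient,
which has weight `|0| = 0` in `(·,·)_ω`, and `(f, ẽₘ)_ω = f̂(m) √m`. The sign factor is
accounted for by `s(m,n) √|mn| = −i √m √n`. -/

open Complex

noncomputable def fourierMode (p : ℤ) (θ : ℝ) : ℂ := exp (I * p * θ)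

lemma fourierMode_mul (p q : ℤ) (θ : ℝ) :
    fourierMode p θ * fourierMode q θ = fourierMode (p + q) θ := by
  simp only [fourierMode, ← exp_add]
  push_cast
  ring_nf

lemma fourierMode_zero (θ : ℝ) : fourierMode 0 θ = 1 := by
  simp [fourierMode]

lemma continuous_fourierMode (p : ℤ) : Continuous (fourierMode p) := by
  unfold fourierMode
  fun_prop

lemma hasDerivAt_fourierMode (p : ℤ) (θ : ℝ) :
    HasDerivAt (fourierMode p) (I * p * fourierMode p θ) θ := by
  convert ((ofRealCLM.hasDerivAt (x := θ)).const_mul (I * p)).cexp using 1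
  · rfl
  · simp [fourierMode, mul_comm]

lemma integral_fourierMode (p : ℤ) :
    ∫ θ in (0 : ℝ)..(2 * Real.pi), fourierMode p θ = if p = 0 then (2 * Real.pi : ℂ) else 0 := by
  split_ifs with hp
  · simp [hp, fourierMode_zero]
  · have hc : I * p ≠ 0 := by simpa using hp
    simp only [fourierMode]
    rw [integral_exp_mul_complex hc]
    have : I * p * ((2 * Real.pi : ℝ) : ℂ) = p * (2 * Real.pi * I) := by push_cast; ring
    rw [this, exp_int_mul_two_pi_mul_I]
    simp

lemma fourierCoef_eq_integral (f : ℝ → ℂ) (j : ℤ) :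
    fourierCoef f j =
      1 / (2 * Real.pi) * ∫ θ in (0 : ℝ)..(2 * Real.pi), f θ * fourierMode (-j) θ := by
  simp [fourierCoef, fourierMode]

lemma fourierCoef_fourierMode (p j : ℤ) :
    fourierCoef (fourierMode p) j = if p = j then 1 else 0 := by
  simp only [fourierCoef_eq_integral, fourierMode_mul, ← sub_eq_add_neg, integral_fourierMode,
    sub_eq_zero]
  split_ifs
  · field_simp
  · simp

lemma fourierCoef_const_mul (c : ℂ) (f : ℝ → ℂ) (j : ℤ) :
    fourierCoef (fun θ => c * f θ) j = c * fourierCoef f j := by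
  simp only [fourierCoef, mul_assoc, intervalIntegral.integral_const_mul]
  ring

lemma fourierCoef_add {f g : ℝ → ℂ} (hf : IntervalIntegrable f volume 0 (2 * Real.pi))
    (hg : IntervalIntegrable g volume 0 (2 * Real.pi)) (j : ℤ) :
    fourierCoef (fun θ => f θ + g θ) j = fourierCoef f j + fourierCoef g j := by
  have hmode : ContinuousOn (fourierMode (-j)) (Set.uIcc 0 (2 * Real.pi)) :=
    (continuous_fourierMode (-j)).continuousOn
  simp only [fourierCoef_eq_integral, add_mul]
  rw [intervalIntegral.integral_add (hf.mul_continuousOn hmode) (hg.mul_continuousOn hmode)]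
  ring

noncomputable def csqrtInt (n : ℤ) : ℂ :=
  if 0 < n then (Real.sqrt n : ℂ) else I * (Real.sqrt |(n : ℝ)| : ℂ)

lemma csqrtInt_zero : csqrtInt 0 = 0 := by
  simp [csqrtInt]

lemma ofReal_sqrt_abs_mul_self (n : ℤ) :
    (Real.sqrt |(n : ℝ)| : ℂ) * (Real.sqrt |(n : ℝ)| : ℂ) = (|n| : ℤ) := by
  rw [← ofReal_mul, Real.mul_self_sqrt (abs_nonneg _), ← Int.cast_abs, ofReal_intCast]

lemma csqrtInt_sq (n : ℤ) : csqrtInt n ^ 2 = n := by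
  unfold csqrtInt
  split_ifs with hn
  · rw [← ofReal_pow, Real.sq_sqrt (by positivity), ofReal_intCast]
  · have habs : ((|n| : ℤ) : ℂ) = -n := by
      rw [abs_of_nonpos (not_lt.mp hn), Int.cast_neg]
    linear_combination (Real.sqrt |(n : ℝ)| * Real.sqrt |(n : ℝ)| : ℂ) * I_sq
      - ofReal_sqrt_abs_mul_self n - habs

lemma conj_csqrtInt_mul_self (n : ℤ) : starRingEnd ℂ (csqrtInt n) * csqrtInt n = (|n| : ℤ) := by
  unfold csqrtInt
  split_ifs with hn
  · rw [conj_ofReal, ← ofReal_mul, Real.mul_self_sqrt (by positivity), abs_of_pos hn]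
    simp
  · rw [map_mul, conj_I, conj_ofReal]
    linear_combination -(Real.sqrt |(n : ℝ)| * Real.sqrt |(n : ℝ)| : ℂ) * I_sq
      + ofReal_sqrt_abs_mul_self n

lemma etld_eq_div (n : ℤ) : etld n = fun θ => fourierMode n θ / csqrtInt n := by
  ext θ
  unfold etld csqrtInt fourierMode
  split_ifs <;> rfl

lemma fourierCoef_etld (m j : ℤ) :
    fourierCoef (etld m) j = (if m = j then 1 else 0) / csqrtInt m := by
  simp only [etld_eq_div, div_eq_inv_mul, fourierCoef_const_mul, fourierCoef_fourierMode]

lemma deriv_etld (n : ℤ) (θ : ℝ) : deriv (etld n) θ = I * csqrtInt n * fourierMode n θ := by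
  have h : n / csqrtInt n = csqrtInt n := by
    rw [← csqrtInt_sq, sq, mul_self_div_self]
  simp only [etld_eq_div, div_eq_inv_mul]
  rw [((hasDerivAt_fourierMode n θ).const_mul _).deriv]
  linear_combination (I * fourierMode n θ) * h

lemma ipOmega_etld_right (f : ℝ → ℂ) (m : ℤ) :
    ipOmega f (etld m) = fourierCoef f m * csqrtInt m := by
  unfold ipOmega
  rw [tsum_eq_single m fun j hj => by simp [fourierCoef_etld, Ne.symm hj], fourierCoef_etld,
    if_pos rfl, ← conj_csqrtInt_mul_self]
  rcases eq_or_ne (csqrtInt m) 0 with h | h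
  · simp [h]
  · simp only [one_div, map_inv₀]
    field_simp
    exact mul_div_cancel_left₀ _ ((map_ne_zero _).mpr h)

lemma fourierCoef_const (c : ℂ) (j : ℤ) :
    fourierCoef (fun _ => c) j = c * if j = 0 then 1 else 0 := by
  simpa only [fourierMode_zero, mul_one, fourierCoef_fourierMode, @eq_comm ℤ 0] using
    fourierCoef_const_mul c (fourierMode 0) j

lemma fourierCoef_fieldAct (X : ℝ → ℝ) {u : ℝ → ℂ}
    (hu : IntervalIntegrable (fun θ => deriv u θ * X θ) volume 0 (2 * Real.pi)) (j : ℤ) :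
    fourierCoef (fieldAct X u) j = -fourierCoef (fun θ => deriv u θ * X θ) j +
      (1 / (2 * Real.pi) * ∫ t in (0 : ℝ)..(2 * Real.pi), deriv u t * X t) *
        if j = 0 then 1 else 0 := by
  unfold fieldAct
  rw [fourierCoef_add (f := fun θ => -(deriv u θ * X θ)) hu.neg intervalIntegrable_const,
    fourierCoef_const]
  simpa using fourierCoef_const_mul (-1) (fun θ => deriv u θ * X θ) j

lemma ipOmega_fieldAct_etld (X : ℝ → ℝ) {u : ℝ → ℂ}
    (hu : IntervalIntegrable (fun θ => deriv u θ * X θ) volume 0 (2 * Real.pi)) (m : ℤ) :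
    ipOmega (fieldAct X u) (etld m) =
      -fourierCoef (fun θ => deriv u θ * X θ) m * csqrtInt m := by
  rw [ipOmega_etld_right, fourierCoef_fieldAct X hu]
  split_ifs with hm
  · simp [hm, csqrtInt_zero]
  · ring

lemma ipOmega_fieldAct_etld_of_eq {X : ℝ → ℝ} {a b : ℂ} {l : ℤ}
    (hX : ∀ θ, (X θ : ℂ) = a * fourierMode l θ + b * fourierMode (-l) θ) (m n : ℤ) :
    ipOmega (fieldAct X (etld n)) (etld m) = -I * csqrtInt m * csqrtInt n *
      (a * (if m - n = l then 1 else 0) + b * (if n - m = l then 1 else 0)) := by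
  have hprod : (fun θ => deriv (etld n) θ * X θ) = fun θ =>
      I * csqrtInt n * a * fourierMode (n + l) θ + I * csqrtInt n * b * fourierMode (n - l) θ := by
    ext θ
    rw [deriv_etld, hX, ← fourierMode_mul, sub_eq_add_neg, ← fourierMode_mul]
    ring
  have hintegrable : ∀ (c : ℂ) (p : ℤ),
      IntervalIntegrable (fun θ => c * fourierMode p θ) volume 0 (2 * Real.pi) := fun c p =>
    ((continuous_fourierMode p).const_mul c).intervalIntegrable _ _
  rw [ipOmega_fieldAct_etld X (hprod ▸ (hintegrable _ _).add (hintegrable _ _)), hprod,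
    fourierCoef_add (hintegrable _ _) (hintegrable _ _), fourierCoef_const_mul,
    fourierCoef_const_mul, fourierCoef_fourierMode, fourierCoef_fourierMode]
  simp only [show n + l = m ↔ m - n = l by omega, show n - l = m ↔ n - m = l by omega]
  ring

lemma ofReal_cos_int_mul (l : ℤ) (θ : ℝ) :
    (Real.cos (l * θ) : ℂ) = 1 / 2 * fourierMode l θ + 1 / 2 * fourierMode (-l) θ := by
  rw [ofReal_cos, cos]
  simp only [fourierMode]
  push_cast
  ring_nf

lemma ofReal_sin_int_mul (l : ℤ) (θ : ℝ) :
    (Real.sin (l * θ) : ℂ) = -I / 2 * fourierMode l θ + I / 2 * fourierMode (-l) θ := by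
  rw [ofReal_sin, sin]
  simp only [fourierMode]
  push_cast
  field_simp
  ring_nf

lemma sFactor_mul_sqrt (m n : ℤ) :
    sFactor m n * (Real.sqrt |((m * n : ℤ) : ℝ)| : ℂ) = -I * csqrtInt m * csqrtInt n := by
  rw [Int.cast_mul, abs_mul, Real.sqrt_mul (abs_nonneg _), ofReal_mul]
  rcases lt_trichotomy m 0 with hm | rfl | hm <;> rcases lt_trichotomy n 0 with hn | rfl | hn <;>
    simp [sFactor, csqrtInt, abs_of_pos, lt_asymm, *] <;> ring_nf <;> simp [I_sq]

theorem trig_field_matrix_entries_general (l k : ℤ)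
    (m n : ℤ) :
    ipOmega (fieldAct (fun θ => Real.cos ((l : ℝ) * θ)) (etld n)) (etld m)
      = sFactor m n * (1 / 2 : ℂ) * (Real.sqrt |((m * n : ℤ) : ℝ)| : ℝ) *
        ((if m - n = l then (1:ℂ) else 0) + (if n - m = l then (1:ℂ) else 0)) ∧
    ipOmega (fieldAct (fun θ => Real.sin ((k : ℝ) * θ)) (etld n)) (etld m)
      = (-Complex.I) * sFactor m n * (1 / 2 : ℂ) * (Real.sqrt |((m * n : ℤ) : ℝ)| : ℝ) *
        ((if m - n = k then (1:ℂ) else 0) - (if n - m = k then (1:ℂ) else 0)) := by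
  have hs := sFactor_mul_sqrt m n
  constructor
  · rw [ipOmega_fieldAct_etld_of_eq (ofReal_cos_int_mul l) m n]
    linear_combination
      (-1 / 2 : ℂ) * ((if m - n = l then (1:ℂ) else 0) + (if n - m = l then 1 else 0)) * hs
  · rw [ipOmega_fieldAct_etld_of_eq (ofReal_sin_int_mul k) m n]
    linear_combination
      (I / 2) * ((if m - n = k then (1:ℂ) else 0) - (if n - m = k then 1 else 0)) * hs

/-- Matrix coefficients of the actions of the trigonometric vector fields
`X_l(θ) = cos(lθ)` and `Y_k(θ) = sin(kθ)` on `H` in the basis `ẽ_n`: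
`(X_l.ẽ_n, ẽ_m)_ω = s(m,n)·(1/2)·√|mn|·(δ_{m−n,l} + δ_{n−m,l})` and
`(Y_k.ẽ_n, ẽ_m)_ω = (−i)·s(m,n)·(1/2)·√|mn|·(δ_{m−n,k} − δ_{n−m,k})`. -/
theorem trig_field_matrix_entries (l k : ℤ) (hl : 1 ≤ l) (hk : 1 ≤ k)
    (m n : ℤ) (hm : m ≠ 0) (hn : n ≠ 0) :
    ipOmega (fieldAct (fun θ => Real.cos ((l : ℝ) * θ)) (etld n)) (etld m)
      = sFactor m n * (1 / 2 : ℂ) * (Real.sqrt |((m * n : ℤ) : ℝ)| : ℝ) *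
        ((if m - n = l then (1:ℂ) else 0) + (if n - m = l then (1:ℂ) else 0)) ∧
    ipOmega (fieldAct (fun θ => Real.sin ((k : ℝ) * θ)) (etld n)) (etld m)
      = (-Complex.I) * sFactor m n * (1 / 2 : ℂ) * (Real.sqrt |((m * n : ℤ) : ℝ)| : ℝ) *
        ((if m - n = k then (1:ℂ) else 0) - (if n - m = k then (1:ℂ) else 0)) :=
  trig_field_matrix_entries_general l k m n
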